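/- arXiv:0904.4356 — 5 statements merged into one kernel-verified Lean document; each statement's English description precedes it below -/
import Mathlib

section
/- Let (X, d) be a nonempty metric space. Then t₀(X) = inf { s(x,y,z) : x, y, z ∈ X }, where t₀(X) is the betweenness exponent and s(x,y,z) is defined to be the unique root s₀ ∈ [1,∞) of d(x,z)^s + d(z,y)^s = d(x,y)^s when max(d(x,z), d(z,y)) < d(x,y), and +∞ otherwise. -/
open Real

/-- The betweenness exponent `t₀(X)`: the supremum (in `ℝ≥0∞`) of all `t > 0`
such that `(x,y) ↦ d(x,y)^t` is a metric (satisfies the triangle inequality)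
on `X`. -/
noncomputable def betweennessExponent (X : Type*) [MetricSpace X] : ENNReal :=
  sSup (ENNReal.ofReal ''
    {t : ℝ | 0 < t ∧ ∀ x y z : X, dist x y ^ t ≤ dist x z ^ t + dist z y ^ t})

/-!
For a nondegenerate triangle `0 < a, b < c`, the map `t ↦ (a/c)^t + (b/c)^t` is strictly
decreasing and equals `1` at the root `r`, so `c^t ≤ a^t + b^t` holds exactly for `t ≤ r`;
for a degenerate one (`c ≤ max a b`) it holds for every `t > 0`. Hence `d^t` satisfies the
triangle inequality exactly when `t ≤ s(x,y,z)` for all triples, i.e. the set defining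
`t₀(X)` consists of the `t > 0` with `t ≤ inf s`, whose supremum is `inf s`.
-/

lemma rpow_le_rpow_add_rpow_iff_le_of_rpow_add_rpow_eq {a b c r t : ℝ} (ha : 0 < a)
    (hb : 0 < b) (hac : a < c) (hbc : b < c) (h : a ^ r + b ^ r = c ^ r) :
    c ^ t ≤ a ^ t + b ^ t ↔ t ≤ r := by
  have hc : 0 < c := ha.trans hac
  have hf : StrictAnti fun u : ℝ => (a / c) ^ u + (b / c) ^ u :=
    (strictAnti_rpow_of_base_lt_one (div_pos ha hc) ((div_lt_one hc).2 hac)).add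
      (strictAnti_rpow_of_base_lt_one (div_pos hb hc) ((div_lt_one hc).2 hbc))
  have hsum (u : ℝ) : (a / c) ^ u + (b / c) ^ u = (a ^ u + b ^ u) / c ^ u := by
    rw [div_rpow ha.le hc.le, div_rpow hb.le hc.le, add_div]
  calc c ^ t ≤ a ^ t + b ^ t
      ↔ (a / c) ^ r + (b / c) ^ r ≤ (a / c) ^ t + (b / c) ^ t := by
        rw [hsum, hsum, h, div_self (rpow_pos_of_pos hc r).ne', le_div_iff₀
          (rpow_pos_of_pos hc t), one_mul]
    _ ↔ t ≤ r := hf.le_iff_ge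

lemma rpow_le_rpow_add_rpow_of_le_max {a b c t : ℝ} (ha : 0 ≤ a) (hb : 0 ≤ b) (hc : 0 ≤ c)
    (ht : 0 ≤ t) (h : c ≤ max a b) : c ^ t ≤ a ^ t + b ^ t := by
  rcases le_max_iff.1 h with hca | hcb
  · exact (rpow_le_rpow hc hca ht).trans (le_add_of_nonneg_right (rpow_nonneg hb t))
  · exact (rpow_le_rpow hc hcb ht).trans (le_add_of_nonneg_left (rpow_nonneg ha t))

lemma ENNReal.sSup_ofReal_image_pos_le (I : ENNReal) :
    sSup (ENNReal.ofReal '' {t : ℝ | 0 < t ∧ ENNReal.ofReal t ≤ I}) = I := by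
  refine le_antisymm (sSup_le ?_) (le_of_forall_lt fun c hcI => ?_)
  · rintro _ ⟨t, ⟨-, htI⟩, rfl⟩
    exact htI
  · obtain ⟨r, -, hcr, hrI⟩ := ENNReal.lt_iff_exists_real_btwn.1 hcI
    have hr : 0 < r := ENNReal.ofReal_pos.1 (hcr.trans_le' zero_le)
    exact hcr.trans_le (le_sSup ⟨r, ⟨hr, hrI.le⟩, rfl⟩)

lemma dist_rpow_le_add_iff_ofReal_le {X : Type*} [PseudoMetricSpace X] {x y z : X}
    {t : ℝ} (ht : 0 < t) {σ : ENNReal}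
    (hσ : (max (dist x z) (dist z y) < dist x y →
        ∃ r : ℝ, 1 ≤ r ∧ σ = ENNReal.ofReal r ∧
          dist x z ^ r + dist z y ^ r = dist x y ^ r) ∧
      (¬ max (dist x z) (dist z y) < dist x y → σ = ⊤)) :
    dist x y ^ t ≤ dist x z ^ t + dist z y ^ t ↔ ENNReal.ofReal t ≤ σ := by
  by_cases h : max (dist x z) (dist z y) < dist x y
  · obtain ⟨r, -, rfl, heq⟩ := hσ.1 h
    obtain ⟨hxz, hzy⟩ := max_lt_iff.1 h
    have htri := dist_triangle x z y
    rw [rpow_le_rpow_add_rpow_iff_le_of_rpow_add_rpow_eq (by linarith) (by linarith) hxz hzy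
      heq, ENNReal.ofReal_le_ofReal_iff', or_iff_left ht.not_ge]
  · rw [hσ.2 h, iff_true_intro le_top, iff_true]
    exact rpow_le_rpow_add_rpow_of_le_max dist_nonneg dist_nonneg dist_nonneg ht.le
      (not_lt.1 h)

theorem betweennessExponent_eq_iInf_s_general {X : Type*} [MetricSpace X]
    (s : X → X → X → ENNReal)
    (hs : ∀ x y z : X,
      (max (dist x z) (dist z y) < dist x y →
        ∃ r : ℝ, 1 ≤ r ∧ s x y z = ENNReal.ofReal r ∧
          dist x z ^ r + dist z y ^ r = dist x y ^ r) ∧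
      (¬ max (dist x z) (dist z y) < dist x y → s x y z = ⊤)) :
    betweennessExponent X = ⨅ (x : X) (y : X) (z : X), s x y z := by
  have hset : {t : ℝ | 0 < t ∧ ∀ x y z : X, dist x y ^ t ≤ dist x z ^ t + dist z y ^ t} =
      {t : ℝ | 0 < t ∧ ENNReal.ofReal t ≤ ⨅ (x : X) (y : X) (z : X), s x y z} := by
    ext t
    refine and_congr_right fun ht => ?_
    simp only [le_iInf_iff]
    exact forall₃_congr fun x y z => dist_rpow_le_add_iff_ofReal_le ht (hs x y z)
  rw [betweennessExponent, hset, ENNReal.sSup_ofReal_image_pos_le]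

/-- Lemma 2.2: `t₀(X) = inf { s(x,y,z) : x,y,z ∈ X }`, where `s(x,y,z)` is
the unique root `s₀ ∈ [1,∞)` of `d(x,z)^s + d(z,y)^s = d(x,y)^s` when
`max(d(x,z), d(z,y)) < d(x,y)`, and `+∞` otherwise. -/
theorem betweennessExponent_eq_iInf_s {X : Type*} [MetricSpace X] [Nonempty X]
    (s : X → X → X → ENNReal)
    (hs : ∀ x y z : X,
      (max (dist x z) (dist z y) < dist x y →
        ∃ r : ℝ, 1 ≤ r ∧ s x y z = ENNReal.ofReal r ∧
          dist x z ^ r + dist z y ^ r = dist x y ^ r) ∧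
      (¬ max (dist x z) (dist z y) < dist x y → s x y z = ⊤)) :
    betweennessExponent X = ⨅ (x : X) (y : X) (z : X), s x y z :=
  betweennessExponent_eq_iInf_s_general s hs
end

section
/- Every metric space Y in the class 𝔐 with at least 5 points is isometric to a subset of ℝ. -/
/-!
Fix two points `p ≠ q` and send `a` to its coordinate on the line `pq` given by the law of
cosines, `g a = (d(p,a)² + d(p,q)² - d(q,a)²) / 2d(p,q)`. Collinearity of `p, q, a` forces
`|g a - g p| = d(a,p)` and `|g a - g q| = d(a,q)`. For a map that is isometric from a base point
`o`, collinearity of `o, a, b` leaves only `d(a,b) = |g a - g b|` or `d(a,b) = |g a + g b - 2 g o|`;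
using both `o = p` and `o = q`, a pair `a, b` on which `g` fails must have
`g a + g b = d(p,q) = d(a,b)` (the four points then form a "pseudo-linear quadruple", which exists
in `𝔐` and does not embed). A fifth point `z` rules this out: examining the pairs `a, z` and
`b, z` and the triple `a, z, b` puts `z` at `p`, `q`, `a`, or on an equilateral triangle of
positive side.
-/

open Finset

theorem eq_abs_sub_or_eq_abs_add {x y c : ℝ} (h : c = |x| + |y| ∨ c = |(|x| - |y|)|) :
    c = |x - y| ∨ c = |x + y| := by
  grind [abs_cases]

theorem eq_zero_or_eq_of_abs_sub_ne {x y w D : ℝ} (hxy : x + y = D) (hne : D ≠ |x - y|)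
    (h : D = |x - w| + |y - w| ∨ D = |(|x - w| - |y - w|)|) : w = 0 ∨ w = D := by
  rcases eq_abs_sub_or_eq_abs_add h with h | h
  · exact absurd (h.trans (by ring_nf)) hne
  · grind [abs_cases]

namespace Metric

variable {Y : Type*} [MetricSpace Y]

def AllTriplesCollinear (Y : Type*) [MetricSpace Y] : Prop :=
  ∀ x y z : Y, dist x z = dist x y + dist y z ∨ dist x y = dist x z + dist z y ∨
    dist y z = dist y x + dist x z

theorem dist_eq_add_of_le_of_le
    (hM : ∀ x y z : Y, dist y z ≤ dist x y → dist x y ≤ dist x z →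
      dist x z = dist x y + dist y z)
    {x y z : Y} (hxy : dist x y ≤ dist x z) (hyz : dist y z ≤ dist x z) :
    dist x z = dist x y + dist y z := by
  rcases le_total (dist y z) (dist x y) with h | h
  · exact hM x y z h hxy
  · have := hM z y x (by rwa [dist_comm y x, dist_comm z y])
      (by rwa [dist_comm z y, dist_comm z x])
    rw [dist_comm z x, dist_comm z y, dist_comm y x] at this
    linarith

theorem allTriplesCollinear_of_menger
    (hM : ∀ x y z : Y, dist y z ≤ dist x y → dist x y ≤ dist x z →
      dist x z = dist x y + dist y z) :
    AllTriplesCollinear Y := by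
  intro x y z
  have hyx := dist_comm y x
  have hzy := dist_comm z y
  rcases le_total (dist x y) (dist x z) with h₁ | h₁
  · rcases le_total (dist y z) (dist x z) with h₂ | h₂
    · exact Or.inl (dist_eq_add_of_le_of_le hM h₁ h₂)
    · exact Or.inr (Or.inr (dist_eq_add_of_le_of_le hM (by linarith) h₂))
  · rcases le_total (dist y z) (dist x y) with h₂ | h₂
    · exact Or.inr (Or.inl (dist_eq_add_of_le_of_le hM h₁ (by linarith)))
    · exact Or.inr (Or.inr (dist_eq_add_of_le_of_le hM (by linarith) (by linarith)))

theorem AllTriplesCollinear.dist_eq_add_or_eq_abs_sub (hcol : AllTriplesCollinear Y) (o a b : Y) :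
    dist a b = dist a o + dist b o ∨ dist a b = |dist a o - dist b o| := by
  have := dist_comm o a
  have := dist_comm o b
  have := dist_nonneg (x := a) (y := b)
  rcases hcol o a b with h | h | h
  · right
    rw [abs_of_nonpos] <;> linarith
  · right
    rw [abs_of_nonneg] <;> linarith [dist_comm a b]
  · left
    linarith [dist_comm a b]

noncomputable def lineCoord (p q a : Y) : ℝ :=
  (dist p a ^ 2 + dist p q ^ 2 - dist q a ^ 2) / (2 * dist p q)

theorem lineCoord_left (p q : Y) : lineCoord p q p = 0 := by
  simp [lineCoord, dist_comm q p]

theorem lineCoord_right {p q : Y} (hpq : p ≠ q) : lineCoord p q q = dist p q := by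
  have := dist_pos.2 hpq
  rw [lineCoord, dist_self]
  field_simp
  ring

theorem AllTriplesCollinear.abs_lineCoord (hcol : AllTriplesCollinear Y) {p q : Y} (hpq : p ≠ q)
    (a : Y) : |lineCoord p q a| = dist a p ∧ |lineCoord p q a - dist p q| = dist a q := by
  have hD : 2 * dist p q ≠ 0 := by positivity [dist_pos.2 hpq]
  have hr := dist_nonneg (x := a) (y := p)
  have hs := dist_nonneg (x := a) (y := q)
  have h := hcol p a q
  rw [dist_comm p a, dist_comm q a] at h
  rw [lineCoord, dist_comm p a, dist_comm q a]
  rcases h with h | h | h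
  · rw [(div_eq_iff (c := dist a p) hD).2
      (by linear_combination (dist p q - dist a p + dist a q) * h),
      abs_of_nonneg hr, abs_of_nonpos (by linarith)]
    constructor <;> linarith
  · rw [(div_eq_iff (c := dist a p) hD).2
      (by linear_combination (dist a p - dist p q + dist a q) * h),
      abs_of_nonneg hr, abs_of_nonneg (by linarith)]
    constructor <;> linarith
  · rw [(div_eq_iff (c := -dist a p) hD).2
      (by linear_combination (-(dist a p + dist p q + dist a q)) * h),
      abs_neg, abs_of_nonneg hr, abs_of_nonpos (by linarith)]
    constructor <;> linarith

theorem AllTriplesCollinear.dist_eq_abs_sub_or_abs_add_sub (hcol : AllTriplesCollinear Y)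
    {f : Y → ℝ} {o : Y} (hf : ∀ a, |f a - f o| = dist a o) (a b : Y) :
    dist a b = |f a - f b| ∨ dist a b = |f a + f b - 2 * f o| := by
  have h := hcol.dist_eq_add_or_eq_abs_sub o a b
  rw [← hf a, ← hf b] at h
  convert eq_abs_sub_or_eq_abs_add h using 3 <;> ring

theorem AllTriplesCollinear.dist_eq_abs_lineCoord_sub_or (hcol : AllTriplesCollinear Y) {p q : Y}
    (hpq : p ≠ q) (a b : Y) :
    dist a b = |lineCoord p q a - lineCoord p q b| ∨
      lineCoord p q a + lineCoord p q b = dist p q ∧ dist a b = dist p q := by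
  have hfp (a : Y) : |lineCoord p q a - lineCoord p q p| = dist a p := by
    rw [lineCoord_left, sub_zero]
    exact (hcol.abs_lineCoord hpq a).1
  have hfq (a : Y) : |lineCoord p q a - lineCoord p q q| = dist a q := by
    rw [lineCoord_right hpq]
    exact (hcol.abs_lineCoord hpq a).2
  refine or_iff_not_imp_left.2 fun hab => ?_
  have hp := (hcol.dist_eq_abs_sub_or_abs_add_sub hfp a b).resolve_left hab
  have hq := (hcol.dist_eq_abs_sub_or_abs_add_sub hfq a b).resolve_left hab
  rw [lineCoord_left, mul_zero, sub_zero] at hp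
  rw [lineCoord_right hpq] at hq
  have hsum : lineCoord p q a + lineCoord p q b = dist p q := by
    rcases abs_eq_abs.1 (hp.symm.trans hq) with h | h
    · linarith [dist_pos.2 hpq]
    · linarith
  exact ⟨hsum, by rw [hp, hsum, abs_of_nonneg dist_nonneg]⟩

theorem AllTriplesCollinear.dist_eq_abs_lineCoord_sub (hcol : AllTriplesCollinear Y) {p q : Y}
    (hpq : p ≠ q) {a b z : Y} (hzp : z ≠ p) (hzq : z ≠ q) (hza : z ≠ a) (hzb : z ≠ b) :
    dist a b = |lineCoord p q a - lineCoord p q b| := by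
  by_contra hab
  obtain ⟨hsum, hD⟩ := (hcol.dist_eq_abs_lineCoord_sub_or hpq a b).resolve_left hab
  rcases hcol.dist_eq_abs_lineCoord_sub_or hpq a z with haz | ⟨saz, daz⟩ <;>
    rcases hcol.dist_eq_abs_lineCoord_sub_or hpq b z with hbz | ⟨sbz, dbz⟩
  · have hazb := hcol.dist_eq_add_or_eq_abs_sub z a b
    rw [haz, hbz, hD] at hazb
    rcases eq_zero_or_eq_of_abs_sub_ne hsum (hD ▸ hab) hazb with hz | hz
    · exact hzp (dist_eq_zero.1 (by rw [← (hcol.abs_lineCoord hpq z).1, hz, abs_zero]))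
    · exact hzq (dist_eq_zero.1 (by rw [← (hcol.abs_lineCoord hpq z).2, hz, sub_self, abs_zero]))
  · have hz : lineCoord p q z = lineCoord p q a := by linarith
    exact hza (dist_eq_zero.1 (by rw [dist_comm, haz, hz, sub_self, abs_zero]))
  · have hz : lineCoord p q z = lineCoord p q b := by linarith
    exact hzb (dist_eq_zero.1 (by rw [dist_comm, hbz, hz, sub_self, abs_zero]))
  · have hazb := hcol.dist_eq_add_or_eq_abs_sub z a b
    rw [daz, dbz, hD, sub_self, abs_zero] at hazb
    have := dist_pos.2 hpq
    rcases hazb with h | h <;> linarith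

end Metric

open Metric in
/-- Menger's theorem (special case): every metric space in the class 𝔐
(`d(x,z) ≥ d(x,y) ≥ d(y,z)` implies `d(x,z) = d(x,y) + d(y,z)`) having at
least 5 points is isometric to a subset of ℝ. -/
theorem menger_embedding {Y : Type*} [MetricSpace Y]
    (hM : ∀ x y z : Y, dist y z ≤ dist x y → dist x y ≤ dist x z →
      dist x z = dist x y + dist y z)
    (h5 : ∃ f : Fin 5 → Y, Function.Injective f) :
    ∃ g : Y → ℝ, ∀ a b : Y, dist (g a) (g b) = dist a b := by
  classical
  have hcol := allTriplesCollinear_of_menger hM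
  obtain ⟨f, hf⟩ := h5
  have hpq : f 0 ≠ f 1 := hf.ne (by decide)
  refine ⟨lineCoord (f 0) (f 1), fun a b => ?_⟩
  have hcard : #{f 0, f 1, a, b} < #(univ.image f) := by
    rw [card_image_of_injective _ hf, card_fin]
    exact card_le_four.trans_lt (by norm_num)
  obtain ⟨z, -, hz⟩ := exists_mem_notMem_of_card_lt_card hcard
  simp only [mem_insert, mem_singleton, not_or] at hz
  rw [Real.dist_eq, hcol.dist_eq_abs_lineCoord_sub hpq hz.1 hz.2.1 hz.2.2.1 hz.2.2.2]
end

section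
/- If Y ∈ 𝔐 and f : ℝ → Y is an isometric embedding, then f is surjective (hence an isometry). -/
/-!
In a space of `𝔐` every triangle is degenerate, so an isosceles triangle with apex `o` either
collapses (`p = q`) or has `o` as the midpoint of `p q`. Given `y` at distance `d` from `f 0`,
the points `f d` and `f (-d)` lie at the same distance `d` from `f 0`. If `y` is neither of them,
it lies at distance `2 d` from both, and then the triangle `f (-d), y, f d` is equilateral with
side `2 d`, forcing `d = 0`, i.e. `y = f 0`.
-/

/-- Membership in the class `𝔐`. -/
def HasDegenerateTriangles (Y : Type*) [MetricSpace Y] : Prop :=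
  ∀ x y z : Y, dist y z ≤ dist x y → dist x y ≤ dist x z → dist x z = dist x y + dist y z

section

variable {Y : Type*} [MetricSpace Y]

theorem HasDegenerateTriangles.eq_or_dist_eq_two_mul (hM : HasDegenerateTriangles Y)
    {o p q : Y} (h : dist o p = dist o q) : p = q ∨ dist p q = 2 * dist o p := by
  rcases le_or_gt (dist p q) (dist o p) with hle | hlt
  · left
    have hsum := hM o q p (by rw [dist_comm, ← h]; exact hle) h.ge
    exact dist_eq_zero.mp (by rw [dist_comm]; linarith)
  · right
    have hsum := hM p o q (by rw [dist_comm o p] at h; exact h.ge)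
      (by rw [dist_comm]; exact hlt.le)
    rw [hsum, dist_comm p o, ← h]
    ring

theorem HasDegenerateTriangles.eq_zero_of_equilateral (hM : HasDegenerateTriangles Y)
    {p q r : Y} {s : ℝ} (hpq : dist p q = s) (hqr : dist q r = s) (hpr : dist p r = s) :
    s = 0 := by
  have hiso : dist q p = dist q r := by rw [dist_comm, hpq, hqr]
  rcases hM.eq_or_dist_eq_two_mul hiso with rfl | h
  · rw [← hpr, dist_self]
  · rw [hpr, dist_comm, hpq] at h
    linarith

end

/-- If `Y ∈ 𝔐` and `f : ℝ → Y` is an isometric embedding, then `f` is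
surjective (hence an isometry). -/
theorem isometric_embedding_of_real_surjective {Y : Type*} [MetricSpace Y]
    (hM : ∀ x y z : Y, dist y z ≤ dist x y → dist x y ≤ dist x z →
      dist x z = dist x y + dist y z)
    (f : ℝ → Y) (hf : ∀ a b : ℝ, dist (f a) (f b) = dist a b) :
    Function.Surjective f := by
  have hM : HasDegenerateTriangles Y := hM
  intro y
  set d := dist (f 0) y
  have hd : 0 ≤ d := dist_nonneg
  have hright : dist (f 0) (f d) = d := by
    rw [hf, Real.dist_eq, zero_sub, abs_neg, abs_of_nonneg hd]
  have hleft : dist (f 0) (f (-d)) = d := by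
    rw [hf, Real.dist_eq, zero_sub, neg_neg, abs_of_nonneg hd]
  have hends : dist (f (-d)) (f d) = 2 * d := by
    rw [hf, Real.dist_eq, abs_of_nonpos (by linarith)]; ring
  rcases hM.eq_or_dist_eq_two_mul hright with h | hy_right
  · exact ⟨d, h⟩
  rcases hM.eq_or_dist_eq_two_mul hleft with h | hy_left
  · exact ⟨-d, h⟩
  rw [hright] at hy_right
  rw [hleft] at hy_left
  have hd0 : 2 * d = 0 := hM.eq_zero_of_equilateral hy_left (by rwa [dist_comm]) hends
  exact ⟨0, dist_eq_zero.mp (by linarith)⟩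
end

section
/- A metric space (X, d) belongs to the class 𝔐 if and only if for every subset Y ⊆ X with at least 3 points, the betweenness exponent t₀(Y) equals 1. -/
/-!
For `t > 1` and `a, b > 0` one has `a ^ t + b ^ t < (a + b) ^ t`, so a point lying strictly
between two others (`d(x,z) = d(x,y) + d(y,z)`) rules out every exponent `t > 1`, while `t = 1`
always works. Conversely, if a triple with `d(y,z) ≤ d(x,y) ≤ d(x,z)` has
`d(x,z) < d(x,y) + d(y,z)`, then on the three-point set `{x, y, z}` every triangle inequality is
strict or trivial; by continuity in the exponent they persist for some `t > 1`, so `t₀ > 1`.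
-/

open Real

open Filter Topology

lemma Real.add_rpow_lt_rpow_add {a b t : ℝ} (ha : 0 < a) (hb : 0 < b) (ht : 1 < t) :
    a ^ t + b ^ t < (a + b) ^ t := by
  have hab : 0 < a + b := by linarith
  have hfrac : ∀ c, 0 < c → c < a + b → (c / (a + b)) ^ t < c / (a + b) := fun c hc hcs =>
    rpow_lt_self_of_lt_one (by positivity) ((div_lt_one hab).2 hcs) ht
  have hsum : (a / (a + b)) ^ t + (b / (a + b)) ^ t < 1 := by
    calc _ < a / (a + b) + b / (a + b) :=
          add_lt_add (hfrac a ha (by linarith)) (hfrac b hb (by linarith))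
      _ = 1 := by field_simp
  rw [div_rpow ha.le hab.le, div_rpow hb.le hab.le, ← add_div, div_lt_one (by positivity)] at hsum
  exact hsum

section betweennessExponent

variable {Y : Type*} [MetricSpace Y]

lemma ofReal_le_betweennessExponent {t : ℝ} (ht : 0 < t)
    (htri : ∀ x y z : Y, dist x y ^ t ≤ dist x z ^ t + dist z y ^ t) :
    ENNReal.ofReal t ≤ betweennessExponent Y :=
  le_sSup ⟨t, ⟨ht, htri⟩, rfl⟩

lemma one_le_betweennessExponent : 1 ≤ betweennessExponent Y := by
  simpa using ofReal_le_betweennessExponent (Y := Y) one_pos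
    fun x y z => by simpa only [rpow_one] using dist_triangle x z y

lemma betweennessExponent_le_one_of_dist_eq_add {x y z : Y} (hxy : x ≠ y) (hyz : y ≠ z)
    (hxz : dist x z = dist x y + dist y z) : betweennessExponent Y ≤ 1 := by
  refine sSup_le ?_
  rintro _ ⟨t, ⟨-, htri⟩, rfl⟩
  refine ENNReal.ofReal_le_one.2 (not_lt.1 fun ht => ?_)
  have := htri x z y
  rw [hxz] at this
  exact this.not_gt (add_rpow_lt_rpow_add (dist_pos.2 hxy) (dist_pos.2 hyz) ht)

lemma one_lt_betweennessExponent_of_finite [Finite Y]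
    (h : ∀ x y z : Y, z ≠ x → z ≠ y → dist x y < dist x z + dist z y) :
    1 < betweennessExponent Y := by
  have htri : ∀ p : Y × Y × Y, ∀ᶠ t in 𝓝[>] (1 : ℝ),
      dist p.1 p.2.1 ^ t ≤ dist p.1 p.2.2 ^ t + dist p.2.2 p.2.1 ^ t := by
    rintro ⟨x, y, z⟩
    have hpos : ∀ᶠ t in 𝓝[>] (1 : ℝ), 0 < t :=
      eventually_nhdsWithin_of_forall fun t (ht : 1 < t) => one_pos.trans ht
    by_cases hzx : z = x
    · filter_upwards [hpos] with t ht
      simp [hzx, zero_rpow ht.ne']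
    by_cases hzy : z = y
    · filter_upwards [hpos] with t ht
      simp [hzy, zero_rpow ht.ne']
    have hcont : ContinuousAt (fun t : ℝ => dist x z ^ t + dist z y ^ t - dist x y ^ t) 1 :=
      ((continuousAt_const_rpow' one_ne_zero).add (continuousAt_const_rpow' one_ne_zero)).sub
        (continuousAt_const_rpow' one_ne_zero)
    have h1 : 0 < dist x z ^ (1 : ℝ) + dist z y ^ (1 : ℝ) - dist x y ^ (1 : ℝ) := by
      simp only [rpow_one]; linarith [h x y z hzx hzy]
    filter_upwards [nhdsWithin_le_nhds (hcont.eventually (eventually_gt_nhds h1))] with t ht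
    linarith
  obtain ⟨t, ht, ht1⟩ := ((eventually_all.2 htri).and self_mem_nhdsWithin).exists
  calc (1 : ENNReal) < ENNReal.ofReal t := ENNReal.one_lt_ofReal.2 ht1
    _ ≤ betweennessExponent Y :=
      ofReal_le_betweennessExponent (one_pos.trans ht1) fun x y z => ht (x, y, z)

end betweennessExponent

lemma exists_dist_le_dist_le_dist {Z : Type*} [MetricSpace Z] {p q r : Z}
    (hpq : p ≠ q) (hqr : q ≠ r) (hpr : p ≠ r) :
    ∃ x y z : Z, x ≠ y ∧ y ≠ z ∧ dist y z ≤ dist x y ∧ dist x y ≤ dist x z := by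
  have := dist_comm p q; have := dist_comm q r; have := dist_comm p r
  rcases le_total (dist p q) (dist q r) with h1 | h1 <;>
    rcases le_total (dist q r) (dist p r) with h2 | h2 <;>
    rcases le_total (dist p q) (dist p r) with h3 | h3 <;>
    first
    | exact ⟨p, q, r, hpq, hqr, by linarith, by linarith⟩
    | exact ⟨p, r, q, hpr, hqr.symm, by linarith, by linarith⟩
    | exact ⟨q, p, r, hpq.symm, hpr, by linarith, by linarith⟩
    | exact ⟨q, r, p, hqr, hpr.symm, by linarith, by linarith⟩
    | exact ⟨r, p, q, hpr.symm, hpq, by linarith, by linarith⟩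
    | exact ⟨r, q, p, hqr.symm, hpq.symm, by linarith, by linarith⟩

lemma exists_injective_fin_three {α : Type*} {x y z : α} (hxy : x ≠ y) (hyz : y ≠ z)
    (hxz : x ≠ z) : ∃ f : Fin 3 → ({x, y, z} : Set α), Function.Injective f := by
  refine ⟨![⟨x, by simp⟩, ⟨y, by simp⟩, ⟨z, by simp⟩], fun i j hij => ?_⟩
  fin_cases i <;> fin_cases j <;>
    simp [Subtype.ext_iff, hxy, hyz, hxz, hxy.symm, hyz.symm, hxz.symm] at hij ⊢

lemma dist_lt_dist_add_dist_of_longest_lt {X : Type*} [MetricSpace X] {x y z u v w : X}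
    (hxy : x ≠ y) (hyz : y ≠ z) (hxz : x ≠ z) (hd₁ : dist y z ≤ dist x y)
    (hd₂ : dist x y ≤ dist x z) (hlt : dist x z < dist x y + dist y z)
    (hu : u ∈ ({x, y, z} : Set X)) (hv : v ∈ ({x, y, z} : Set X)) (hw : w ∈ ({x, y, z} : Set X))
    (hwu : w ≠ u) (hwv : w ≠ v) : dist u v < dist u w + dist w v := by
  have := dist_pos.2 hxy; have := dist_pos.2 hyz; have := dist_pos.2 hxz
  have := dist_comm x y; have := dist_comm y z; have := dist_comm x z
  have := dist_pos.2 hwu; have := dist_comm u w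
  simp only [Set.mem_insert_iff, Set.mem_singleton_iff] at hu hv hw
  rcases hu with rfl | rfl | rfl <;> rcases hv with rfl | rfl | rfl <;>
    rcases hw with rfl | rfl | rfl <;>
    first
    | exact absurd rfl hwu
    | exact absurd rfl hwv
    | (try rw [dist_self]); linarith

/-- `X ∈ 𝔐` if and only if every subset `Y ⊆ X` with at least 3 points has
betweenness exponent `t₀(Y) = 1`. -/
theorem mem_M_iff_betweennessExponent_subsets_eq_one
    {X : Type*} [MetricSpace X] :
    (∀ x y z : X, dist y z ≤ dist x y → dist x y ≤ dist x z →
      dist x z = dist x y + dist y z) ↔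
    ∀ Y : Set X, (∃ f : Fin 3 → Y, Function.Injective f) →
      betweennessExponent Y = 1 := by
  constructor
  · rintro hM Y ⟨f, hf⟩
    obtain ⟨x, y, z, hxy, hyz, hd₁, hd₂⟩ := exists_dist_le_dist_le_dist
      (hf.ne (by decide : (0 : Fin 3) ≠ 1)) (hf.ne (by decide : (1 : Fin 3) ≠ 2))
      (hf.ne (by decide : (0 : Fin 3) ≠ 2))
    exact le_antisymm (betweennessExponent_le_one_of_dist_eq_add hxy hyz (hM x y z hd₁ hd₂))
      one_le_betweennessExponent
  · intro h x y z hd₁ hd₂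
    rcases eq_or_ne x y with rfl | hxy
    · simp
    rcases eq_or_ne y z with rfl | hyz
    · simp
    have hxz : x ≠ z := by
      rintro rfl
      exact hxy (dist_le_zero.1 (hd₂.trans_eq (dist_self x)))
    refine (dist_triangle x y z).eq_of_not_lt fun hlt => ?_
    have hY := h _ (exists_injective_fin_three hxy hyz hxz)
    refine (one_lt_betweennessExponent_of_finite fun u v w hwu hwv => ?_).ne' hY
    exact dist_lt_dist_add_dist_of_longest_lt (X := X) hxy hyz hxz hd₁ hd₂ hlt u.2 v.2 w.2
      (Subtype.coe_ne_coe.2 hwu) (Subtype.coe_ne_coe.2 hwv)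
end

section
/- Let (X, d) be a metric space with a point p, and suppose lim_{x,y → p} F(x,y) = 0, where F(x,y) = d(x,y)·min(d(x,p), d(y,p)) / max(d(x,p), d(y,p))² (and F(p,p) = 0). Then for any two sequences x̃ = (xₙ), ỹ = (yₙ) converging to p that are mutually stable with respect to a normalizing sequence (rₙ), and mutually stable with the constant sequence p̃, with d̃(x̃, p̃) ≤ d̃(ỹ, p̃): if d̃(ỹ, p̃) > 0 then d̃(x̃, ỹ)·d̃(x̃, p̃) = 0. In particular, every pretangent space Ω^X_{p,r̃} has at most 2 points. -/
open Filter Topology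

open Classical in
/-- The function `F(x,y) = d(x,y)·min(d(x,p),d(y,p)) / max(d(x,p),d(y,p))²`
for `(x,y) ≠ (p,p)`, with `F(p,p) = 0`. -/
noncomputable def Fp {X : Type*} [MetricSpace X] (p x y : X) : ℝ :=
  if (x, y) = (p, p) then 0
  else dist x y * min (dist x p) (dist y p) / (max (dist x p) (dist y p)) ^ 2

/-!
`F` is homogeneous of degree `0` in the three distances, so dividing them by `rₙ` shows that
`F(xₙ, yₙ)` tends to `d̃(x̃,ỹ) · min(d̃(x̃,p̃), d̃(ỹ,p̃)) / max(d̃(x̃,p̃), d̃(ỹ,p̃))²` whenever the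
maximum is positive. As `F → 0` at `(p, p)`, this forces `d̃(x̃,ỹ) · min(d̃(x̃,p̃), d̃(ỹ,p̃)) = 0`.
So two points of a pretangent space at positive distance cannot both differ from `p̃`, and among
three points two coincide with `p̃`, hence with each other by the triangle inequality.
-/

lemma Fp_eq_div {X : Type*} [MetricSpace X] (p x y : X) {c : ℝ} (hc : 0 < c) :
    Fp p x y = dist x y / c * min (dist x p / c) (dist y p / c) /
      max (dist x p / c) (dist y p / c) ^ 2 := by
  rw [min_div_div_right hc.le, max_div_div_right hc.le, div_mul_div_comm, div_pow, ← sq,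
    div_div_div_cancel_right₀ (pow_ne_zero 2 hc.ne')]
  unfold Fp
  split_ifs with h
  · simp_all
  · rfl

section

variable {X : Type*} [MetricSpace X] {p : X} {r : ℕ → ℝ}

lemma nonneg_of_tendsto_dist_div (hr : ∀ n, 0 < r n) {a b : ℕ → X} {d : ℝ}
    (h : Tendsto (fun n => dist (a n) (b n) / r n) atTop (𝓝 d)) : 0 ≤ d :=
  ge_of_tendsto' h fun n => div_nonneg dist_nonneg (hr n).le

lemma tendsto_of_tendsto_dist_div (hr : ∀ n, r n ≠ 0) (hr0 : Tendsto r atTop (𝓝 0))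
    {a : ℕ → X} {d : ℝ} (h : Tendsto (fun n => dist (a n) p / r n) atTop (𝓝 d)) :
    Tendsto a atTop (𝓝 p) := by
  rw [tendsto_iff_dist_tendsto_zero]
  simpa [div_mul_cancel₀ _ (hr _)] using h.mul hr0

lemma eq_zero_of_tendsto_dist_div_of_eq_zero (hr : ∀ n, 0 < r n) {a b : ℕ → X}
    {dab dap dbp : ℝ} (hab : Tendsto (fun n => dist (a n) (b n) / r n) atTop (𝓝 dab))
    (hap : Tendsto (fun n => dist (a n) p / r n) atTop (𝓝 dap))
    (hbp : Tendsto (fun n => dist (b n) p / r n) atTop (𝓝 dbp))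
    (hap0 : dap = 0) (hbp0 : dbp = 0) : dab = 0 := by
  refine le_antisymm ?_ (nonneg_of_tendsto_dist_div hr hab)
  have hsum := hap.add hbp
  rw [hap0, hbp0, add_zero] at hsum
  refine le_of_tendsto_of_tendsto' hab hsum fun n => ?_
  rw [← add_div, dist_comm (b n)]
  exact div_le_div_of_nonneg_right (dist_triangle _ _ _) (hr n).le

lemma tendsto_Fp (hr : ∀ n, 0 < r n) {x y : ℕ → X} {dxy dxp dyp : ℝ}
    (hxy : Tendsto (fun n => dist (x n) (y n) / r n) atTop (𝓝 dxy))
    (hxp : Tendsto (fun n => dist (x n) p / r n) atTop (𝓝 dxp))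
    (hyp : Tendsto (fun n => dist (y n) p / r n) atTop (𝓝 dyp)) (hM : max dxp dyp ≠ 0) :
    Tendsto (fun n => Fp p (x n) (y n)) atTop
      (𝓝 (dxy * min dxp dyp / max dxp dyp ^ 2)) :=
  ((hxy.mul (hxp.min hyp)).div ((hxp.max hyp).pow 2) (pow_ne_zero 2 hM)).congr fun n =>
    (Fp_eq_div p (x n) (y n) (hr n)).symm

lemma mul_min_eq_zero_of_tendsto_Fp
    (hF : Tendsto (fun q : X × X => Fp p q.1 q.2) (𝓝 (p, p)) (𝓝 0))
    (hr : ∀ n, 0 < r n) (hr0 : Tendsto r atTop (𝓝 0)) {x y : ℕ → X} {dxy dxp dyp : ℝ}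
    (hxy : Tendsto (fun n => dist (x n) (y n) / r n) atTop (𝓝 dxy))
    (hxp : Tendsto (fun n => dist (x n) p / r n) atTop (𝓝 dxp))
    (hyp : Tendsto (fun n => dist (y n) p / r n) atTop (𝓝 dyp)) :
    dxy * min dxp dyp = 0 := by
  have hxp0 := nonneg_of_tendsto_dist_div hr hxp
  have hyp0 := nonneg_of_tendsto_dist_div hr hyp
  rcases (le_max_of_le_left hxp0 : 0 ≤ max dxp dyp).eq_or_lt with hM | hM
  · have hmin : min dxp dyp = 0 := le_antisymm (hM ▸ min_le_max) (le_min hxp0 hyp0)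
    rw [hmin, mul_zero]
  · have hx := tendsto_of_tendsto_dist_div (fun n => (hr n).ne') hr0 hxp
    have hy := tendsto_of_tendsto_dist_div (fun n => (hr n).ne') hr0 hyp
    have hlim :=
      tendsto_nhds_unique (tendsto_Fp hr hxy hxp hyp hM.ne') (hF.comp (hx.prodMk_nhds hy))
    simpa [hM.ne'] using hlim

end

/-- If `lim_{x,y → p} F(x,y) = 0` then for sequences `x̃, ỹ` converging to
`p`, mutually stable w.r.t. a normalizing sequence and mutually stable with
the constant sequence `p̃`, with `d̃(x̃,p̃) ≤ d̃(ỹ,p̃)`: if `d̃(ỹ,p̃) > 0`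
then `d̃(x̃,ỹ)·d̃(x̃,p̃) = 0`. In particular, among any three members of a
self-stable family some two are at limit distance 0, i.e. every pretangent
space `Ω^X_{p,r̃}` has at most two points. -/
theorem pretangent_two_points_of_F_tendsto_zero {X : Type*} [MetricSpace X]
    (p : X)
    (hF : Tendsto (fun q : X × X => Fp p q.1 q.2) (𝓝 (p, p)) (𝓝 0))
    (r : ℕ → ℝ) (hr : ∀ n, 0 < r n) (hr0 : Tendsto r atTop (𝓝 0)) :
    (∀ x y : ℕ → X, Tendsto x atTop (𝓝 p) → Tendsto y atTop (𝓝 p) →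
      ∀ dxy dxp dyp : ℝ,
        Tendsto (fun n => dist (x n) (y n) / r n) atTop (𝓝 dxy) →
        Tendsto (fun n => dist (x n) p / r n) atTop (𝓝 dxp) →
        Tendsto (fun n => dist (y n) p / r n) atTop (𝓝 dyp) →
        dxp ≤ dyp → 0 < dyp → dxy * dxp = 0) ∧
    (∀ x y z : ℕ → X, ∀ dxy dxz dyz dxp dyp dzp : ℝ,
      Tendsto (fun n => dist (x n) (y n) / r n) atTop (𝓝 dxy) →
      Tendsto (fun n => dist (x n) (z n) / r n) atTop (𝓝 dxz) →
      Tendsto (fun n => dist (y n) (z n) / r n) atTop (𝓝 dyz) →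
      Tendsto (fun n => dist (x n) p / r n) atTop (𝓝 dxp) →
      Tendsto (fun n => dist (y n) p / r n) atTop (𝓝 dyp) →
      Tendsto (fun n => dist (z n) p / r n) atTop (𝓝 dzp) →
      dxy = 0 ∨ dxz = 0 ∨ dyz = 0) := by
  refine ⟨fun x y _ _ dxy dxp dyp hxy hxp hyp hle _ => ?_,
    fun x y z dxy dxz dyz dxp dyp dzp hxy hxz hyz hxp hyp hzp => ?_⟩
  · simpa [min_eq_left hle] using mul_min_eq_zero_of_tendsto_Fp hF hr hr0 hxy hxp hyp
  · have kxy := mul_min_eq_zero_of_tendsto_Fp hF hr hr0 hxy hxp hyp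
    have kxz := mul_min_eq_zero_of_tendsto_Fp hF hr hr0 hxz hxp hzp
    have kyz := mul_min_eq_zero_of_tendsto_Fp hF hr hr0 hyz hyp hzp
    have zxy := eq_zero_of_tendsto_dist_div_of_eq_zero hr hxy hxp hyp
    have zxz := eq_zero_of_tendsto_dist_div_of_eq_zero hr hxz hxp hzp
    have zyz := eq_zero_of_tendsto_dist_div_of_eq_zero hr hyz hyp hzp
    simp only [mul_eq_zero, min_eq_iff] at kxy kxz kyz
    tauto
end
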